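/- arXiv:1810.12197 — 4 statements merged into one kernel-verified Lean document; each statement's English description precedes it below -/
import Mathlib

section
/- For any nonzero matrix ξ on a finite-dimensional bipartite Hilbert space A⊗B with dim B = d_B, the positive semidefinite operator √(ξξ†) satisfies √(ξξ†) ⪯ d_B · ‖ξ‖₁ · (σ_A ⊗ 1_B), where σ_A := ‖ξ‖₁⁻¹ · Tr_B[√(ξξ†)] is a unit-trace positive semidefinite operator on A. -/
open Matrix Kronecker
open scoped ComplexOrder
open scoped MatrixOrder

/-- `√(M Mᴴ)`, the positive semidefinite absolute value of a matrix. -/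
noncomputable def absM {n : Type*} [Fintype n] [DecidableEq n] (M : Matrix n n ℂ) :
    Matrix n n ℂ :=
  CFC.sqrt (M * Mᴴ)

/-- The trace norm `‖M‖₁ = Tr √(M Mᴴ)`. -/
noncomputable def traceNorm {n : Type*} [Fintype n] [DecidableEq n] (M : Matrix n n ℂ) : ℝ :=
  (absM M).trace.re

/-- Partial trace over the second (B) tensor factor. -/
noncomputable def ptraceB {A B : Type*} [Fintype A] [Fintype B]
    (M : Matrix (A × B) (A × B) ℂ) : Matrix A A ℂ :=
  Matrix.of fun i j => ∑ k : B, M (i, k) (j, k)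

/-!
With `P = √(ξξ†) ⪰ 0`, everything reduces to the operator inequality `P ⪯ d_B (Tr_B P ⊗ 1_B)`.
Cutting `P` into `B`-blocks with the projections `Π_k = 1_A ⊗ |k⟩⟨k|`, which sum to `1`, an
operator Cauchy–Schwarz inequality gives the pinching bound
`P = (∑ₖ Π_k)† P (∑ₖ Π_k) ⪯ d_B ∑ₖ Π_k P Π_k`. The pinched matrix is block diagonal with blocks
`P_kk ⪰ 0`, so it is dominated by the block-diagonal matrix all of whose blocks equal
`∑ₖ P_kk = Tr_B P`, which is `Tr_B P ⊗ 1_B`.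
-/

open Finset

-- Inserting `a j` creates cross terms, paid for by `∑ i ∈ s, (a i - a j)⋆ P (a i - a j) ⪰ 0`;
-- this avoids dividing by `2`, which an abstract star-ordered ring does not allow.
theorem star_sum_mul_mul_sum_le_card_smul {R ι : Type*} [Ring R] [StarRing R] [PartialOrder R]
    [StarOrderedRing R] {P : R} (hP : 0 ≤ P) (s : Finset ι) (a : ι → R) :
    star (∑ i ∈ s, a i) * P * (∑ i ∈ s, a i) ≤ #s • ∑ i ∈ s, star (a i) * P * a i := by
  classical
  induction s using Finset.induction_on with
  | empty => simp
  | insert j s hj ih =>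
    have hcross : star (∑ i ∈ s, a i) * P * a j + star (a j) * P * ∑ i ∈ s, a i ≤
        ∑ i ∈ s, star (a i) * P * a i + #s • (star (a j) * P * a j) := by
      have h := sum_nonneg fun i (_ : i ∈ s) => star_left_conjugate_nonneg hP (a i - a j)
      simp only [star_sub, sub_mul, mul_sub, sum_sub_distrib, sum_const] at h
      rw [star_sum, sum_mul, sum_mul, mul_sum, ← sub_nonneg]
      convert h using 1
      abel
    rw [sum_insert hj, sum_insert hj, card_insert_of_notMem hj]
    calc _ = star (a j) * P * a j
          + (star (∑ i ∈ s, a i) * P * a j + star (a j) * P * ∑ i ∈ s, a i)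
          + star (∑ i ∈ s, a i) * P * ∑ i ∈ s, a i := by
          simp only [star_add, add_mul, mul_add]; abel
      _ ≤ star (a j) * P * a j
          + (∑ i ∈ s, star (a i) * P * a i + #s • (star (a j) * P * a j))
          + #s • ∑ i ∈ s, star (a i) * P * a i := by gcongr
      _ = _ := by rw [succ_nsmul, smul_add]; abel

namespace Matrix

variable {𝕜 m o : Type*} [RCLike 𝕜] [DecidableEq m] [Fintype o] [DecidableEq o]

theorem blockDiagonal_le_blockDiagonal [Fintype m] {M N : o → Matrix m m 𝕜} (h : ∀ k, M k ≤ N k) :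
    blockDiagonal M ≤ blockDiagonal N := by
  rw [le_iff, ← blockDiagonal_sub]
  let R k := CFC.sqrt (N k - M k)
  have hR : N - M = fun k => (R k)ᴴ * R k := funext fun k => by
    rw [(CFC.sqrt_nonneg _).posSemidef.isHermitian.eq,
      CFC.sqrt_mul_sqrt_self _ (sub_nonneg.2 (h k))]
    rfl
  rw [hR, show blockDiagonal (fun k => (R k)ᴴ * R k) = (blockDiagonal R)ᴴ * blockDiagonal R by
    rw [blockDiagonal_conjTranspose, blockDiagonal_mul]]
  exact posSemidef_conjTranspose_mul_self _

/-- `1 ⊗ |k⟩⟨k|`. -/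
def blockProjection (k : o) : Matrix (m × o) (m × o) 𝕜 :=
  diagonal fun p => if p.2 = k then 1 else 0

theorem sum_blockProjection : ∑ k, (blockProjection k : Matrix (m × o) (m × o) 𝕜) = 1 := by
  ext ⟨i, c⟩ ⟨j, c'⟩
  simp [blockProjection, Matrix.sum_apply, one_apply, diagonal_apply]

theorem sum_star_blockProjection_mul_mul_blockProjection [Fintype m] (P : Matrix (m × o) (m × o) 𝕜) :
    ∑ k, star (blockProjection k) * P * blockProjection k = blockDiagonal (blockDiag P) := by
  ext ⟨i, c⟩ ⟨j, c'⟩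
  rcases eq_or_ne c c' with rfl | h <;>
    simp [blockProjection, Matrix.sum_apply, blockDiagonal_apply, blockDiag_apply,
      star_eq_conjTranspose, diagonal_conjTranspose, *]

theorem PosSemidef.le_card_smul_blockDiagonal_blockDiag [Fintype m] {P : Matrix (m × o) (m × o) 𝕜}
    (hP : P.PosSemidef) : P ≤ Fintype.card o • blockDiagonal (blockDiag P) := by
  simpa [sum_blockProjection, sum_star_blockProjection_mul_mul_blockProjection] using
    star_sum_mul_mul_sum_le_card_smul hP.nonneg univ (blockProjection (m := m) (𝕜 := 𝕜))

end Matrix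

section PartialTrace

variable {A B : Type*} [Fintype A] [Fintype B]

theorem ptraceB_eq_sum_blockDiag (P : Matrix (A × B) (A × B) ℂ) :
    ptraceB P = ∑ k, blockDiag P k := by
  ext i j
  simp [ptraceB, Matrix.sum_apply, blockDiag_apply]

theorem trace_ptraceB (P : Matrix (A × B) (A × B) ℂ) : (ptraceB P).trace = P.trace := by
  simp [trace, ptraceB, Fintype.sum_prod_type]

theorem posSemidef_ptraceB {P : Matrix (A × B) (A × B) ℂ} (hP : P.PosSemidef) :
    (ptraceB P).PosSemidef := by
  rw [ptraceB_eq_sum_blockDiag]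
  exact posSemidef_sum _ fun k _ => hP.submatrix _

theorem Matrix.PosSemidef.le_card_smul_ptraceB_kronecker_one [DecidableEq A] [DecidableEq B]
    {P : Matrix (A × B) (A × B) ℂ} (hP : P.PosSemidef) :
    P ≤ Fintype.card B • (ptraceB P ⊗ₖ (1 : Matrix B B ℂ)) := by
  calc P ≤ Fintype.card B • blockDiagonal (blockDiag P) := hP.le_card_smul_blockDiagonal_blockDiag
    _ ≤ Fintype.card B • blockDiagonal fun _ => ptraceB P := by
      gcongr
      refine blockDiagonal_le_blockDiagonal fun k => ?_
      rw [ptraceB_eq_sum_blockDiag]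
      exact single_le_sum (fun k _ => (hP.submatrix _).nonneg) (mem_univ k)
    _ = Fintype.card B • (ptraceB P ⊗ₖ (1 : Matrix B B ℂ)) := by rw [kronecker_one]

end PartialTrace

section TraceNorm

variable {n : Type*} [Fintype n] [DecidableEq n]

theorem posSemidef_absM (M : Matrix n n ℂ) : (absM M).PosSemidef :=
  (CFC.sqrt_nonneg _).posSemidef

theorem trace_absM (M : Matrix n n ℂ) : (absM M).trace = traceNorm M :=
  Complex.eq_re_of_ofReal_le (posSemidef_absM M).trace_nonneg

theorem traceNorm_pos {M : Matrix n n ℂ} (hM : M ≠ 0) : 0 < traceNorm M := by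
  have hP := posSemidef_absM M
  refine Complex.zero_lt_real.1 (lt_of_le_of_ne (trace_absM M ▸ hP.trace_nonneg) fun h => hM ?_)
  have habs : absM M = 0 := hP.trace_eq_zero_iff.1 (by rw [trace_absM, ← h])
  rw [← self_mul_conjTranspose_eq_zero]
  calc M * Mᴴ = absM M * absM M :=
        (CFC.sqrt_mul_sqrt_self _ (posSemidef_self_mul_conjTranspose M).nonneg).symm
    _ = 0 := by rw [habs, zero_mul]

end TraceNorm


/-- For any nonzero matrix ξ on A⊗B, with σ_A := ‖ξ‖₁⁻¹ · Tr_B[√(ξξ†)], the operator σ_A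
is a unit-trace positive semidefinite operator on A and
√(ξξ†) ⪯ d_B · ‖ξ‖₁ · (σ_A ⊗ 1_B) in the Loewner order. -/
theorem abs_le_dimB_smul_marginal_kron_one {A B : Type*} [Fintype A] [DecidableEq A]
    [Fintype B] [DecidableEq B]
    (ξ : Matrix (A × B) (A × B) ℂ) (hξ : ξ ≠ 0) :
    ((((traceNorm ξ : ℂ))⁻¹ • ptraceB (absM ξ)).PosSemidef) ∧
    (((traceNorm ξ : ℂ))⁻¹ • ptraceB (absM ξ)).trace = 1 ∧
    ((((Fintype.card B : ℂ) * (traceNorm ξ : ℂ)) •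
        ((((traceNorm ξ : ℂ))⁻¹ • ptraceB (absM ξ)) ⊗ₖ (1 : Matrix B B ℂ)) - absM ξ).PosSemidef) := by
  have hP := posSemidef_absM ξ
  have ht := traceNorm_pos hξ
  have htC : (traceNorm ξ : ℂ) ≠ 0 := Complex.ofReal_ne_zero.2 ht.ne'
  refine ⟨(posSemidef_ptraceB hP).smul ?_, ?_, ?_⟩
  · rw [← Complex.ofReal_inv, Complex.zero_le_real]
    exact inv_nonneg.2 ht.le
  · rw [trace_smul, trace_ptraceB, trace_absM, smul_eq_mul, inv_mul_cancel₀ htC]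
  · rw [smul_kronecker, smul_smul, mul_assoc, mul_inv_cancel₀ htC, mul_one,
      Nat.cast_smul_eq_nsmul, ← le_iff]
    exact hP.le_card_smul_ptraceB_kronecker_one
end

section
/- Let {P_z}_{z=1}^t be a state two-design on a d-dimensional space B, and let ξ̃_{AB} be any matrix on A⊗B. Then Σ_z (d²/t²)·Tr[(Tr_B[(1_A⊗P_z)ξ̃_{AB}])·(Tr_B[(1_A⊗P_z)ξ̃_{AB}])†] = (d/(t(d+1)))·(Tr[ξ̃_A ξ̃_A†] + Tr[ξ̃_{AB} ξ̃_{AB}†]), where ξ̃_A = Tr_B[ξ̃_{AB}]. In particular the left side equals (1/t)·(d/(d+1))·(‖ξ̃_A‖₂² + ‖ξ̃_{AB}‖₂²) and hence is at least (1/t)·(d/(d+1))·‖ξ̃_{AB}‖₂². -/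
open Matrix Kronecker
open scoped ComplexOrder

/-- The Hilbert–Schmidt (Frobenius) norm `‖M‖₂ = √(Tr[Mᴴ M])`. -/
noncomputable def frobNorm {n : Type*} [Fintype n] (M : Matrix n n ℂ) : ℝ :=
  Real.sqrt ((Mᴴ * M).trace.re)

/-- The swap operator F on B⊗B. -/
def swapOp (B : Type*) [DecidableEq B] : Matrix (B × B) (B × B) ℂ :=
  Matrix.of fun p q => if p.1 = q.2 ∧ p.2 = q.1 then 1 else 0

/-!
Write `ξᵢⱼ` for the `B × B` blocks of `ξ` and `W = Σᵢⱼ ξᵢⱼ ⊗ ξᵢⱼᴴ`. The entries of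
`Tr_B[(1 ⊗ P) ξ]` are `Tr[P ξᵢⱼ]`, and for Hermitian `P` we have
`|Tr[P ξᵢⱼ]|² = Tr[(P ⊗ P)(ξᵢⱼ ⊗ ξᵢⱼᴴ)]`, so the squared 2-norm of the measured operator is
`Tr[(P ⊗ P) W]`, linear in `P ⊗ P`. The design property replaces `Σ_z P_z ⊗ P_z` by a multiple
of `1 + F`, and `Tr[W] = ‖ξ_A‖₂²` while, by the swap trick `Tr[F (X ⊗ Y)] = Tr[X Y]`,
`Tr[F W] = ‖ξ‖₂²`.
-/

theorem trace_mul_conjTranspose_eq_sum {m n R : Type*} [Fintype m] [Fintype n]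
    [NonUnitalSemiring R] [StarRing R] (M : Matrix m n R) :
    (M * Mᴴ).trace = ∑ i, ∑ j, M i j * star (M i j) := by
  simp [trace, mul_apply]

theorem re_trace_mul_conjTranspose_nonneg {m n : Type*} [Fintype m] [Fintype n]
    (M : Matrix m n ℂ) : 0 ≤ (M * Mᴴ).trace.re :=
  (Complex.le_def.mp (posSemidef_self_mul_conjTranspose M).trace_nonneg).1

theorem frobNorm_sq {n : Type*} [Fintype n] (M : Matrix n n ℂ) :
    frobNorm M ^ 2 = (M * Mᴴ).trace.re := by
  rw [frobNorm, trace_mul_comm, Real.sq_sqrt (re_trace_mul_conjTranspose_nonneg M)]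

theorem trace_swapOp_mul_kronecker {B : Type*} [Fintype B] [DecidableEq B]
    (X Y : Matrix B B ℂ) : (swapOp B * (X ⊗ₖ Y)).trace = (X * Y).trace := by
  simp [trace, mul_apply, swapOp, Fintype.sum_prod_type, ite_and]
  exact Finset.sum_comm

theorem Matrix.IsHermitian.star_trace_mul {n : Type*} [Fintype n] {P : Matrix n n ℂ}
    (hP : P.IsHermitian) (X : Matrix n n ℂ) : star (P * X).trace = (P * Xᴴ).trace := by
  rw [← trace_conjTranspose, conjTranspose_mul, hP.eq, trace_mul_comm]

section PartialTrace

variable {A B : Type*} [Fintype A] [Fintype B]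

-- `(comp A A B B ℂ).symm ξ i j` is the `B × B` block `ξᵢⱼ` of `ξ`.
theorem ptraceB_apply (ξ : Matrix (A × B) (A × B) ℂ) (i j : A) :
    ptraceB ξ i j = ((comp A A B B ℂ).symm ξ i j).trace := rfl

theorem ptraceB_one_kronecker_mul_apply [DecidableEq A] (P : Matrix B B ℂ)
    (ξ : Matrix (A × B) (A × B) ℂ) (i j : A) :
    ptraceB ((1 ⊗ₖ P) * ξ) i j = (P * (comp A A B B ℂ).symm ξ i j).trace := by
  simp [ptraceB, trace, mul_apply, Fintype.sum_prod_type, one_apply]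

noncomputable def blockGram (ξ : Matrix (A × B) (A × B) ℂ) : Matrix (B × B) (B × B) ℂ :=
  ∑ i, ∑ j, (comp A A B B ℂ).symm ξ i j ⊗ₖ ((comp A A B B ℂ).symm ξ i j)ᴴ

theorem trace_ptraceB_mul_conjTranspose [DecidableEq A] {P : Matrix B B ℂ}
    (hP : P.IsHermitian) (ξ : Matrix (A × B) (A × B) ℂ) :
    (ptraceB ((1 ⊗ₖ P) * ξ) * (ptraceB ((1 ⊗ₖ P) * ξ))ᴴ).trace
      = ((P ⊗ₖ P) * blockGram ξ).trace := by
  simp only [trace_mul_conjTranspose_eq_sum, ptraceB_one_kronecker_mul_apply,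
    hP.star_trace_mul, blockGram, Matrix.mul_sum, trace_sum, ← mul_kronecker_mul,
    trace_kronecker]

theorem trace_blockGram (ξ : Matrix (A × B) (A × B) ℂ) :
    (blockGram ξ).trace = (ptraceB ξ * (ptraceB ξ)ᴴ).trace := by
  simp only [blockGram, trace_sum, trace_kronecker, trace_conjTranspose,
    trace_mul_conjTranspose_eq_sum, ptraceB_apply]

theorem trace_swapOp_mul_blockGram [DecidableEq B] (ξ : Matrix (A × B) (A × B) ℂ) :
    (swapOp B * blockGram ξ).trace = (ξ * ξᴴ).trace := by
  simp only [blockGram, Matrix.mul_sum, trace_sum, trace_swapOp_mul_kronecker,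
    trace_mul_conjTranspose_eq_sum, Fintype.sum_prod_type]
  exact Finset.sum_congr rfl fun _ _ => Finset.sum_comm

end PartialTrace

/-- Two-design computation of the Hilbert–Schmidt norm of the measured operator:
`Σ_z (d²/t²)·Tr[N_z N_z†] = (d/(t(d+1)))·(Tr[ξ̃_A ξ̃_A†] + Tr[ξ̃ ξ̃†])` where
`N_z = Tr_B[(1_A⊗P_z) ξ̃]` and `ξ̃_A = Tr_B[ξ̃]`; in particular the left-hand side is at least
`(1/t)·(d/(d+1))·‖ξ̃‖₂²`. -/
theorem two_design_frob_identity {A B : Type*} [Fintype A] [DecidableEq A]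
    [Fintype B] [DecidableEq B] (t : ℕ) (P : Fin t → Matrix B B ℂ)
    (hproj : ∀ z, (P z).IsHermitian ∧ P z * P z = P z ∧ (P z).trace = 1)
    (hdesign : ((t : ℂ))⁻¹ • ∑ z, (P z) ⊗ₖ (P z) =
      (((Fintype.card B : ℂ) * ((Fintype.card B : ℂ) + 1)))⁻¹ •
        ((1 : Matrix (B × B) (B × B) ℂ) + swapOp B))
    (ξ : Matrix (A × B) (A × B) ℂ) :
    (∑ z, ((Fintype.card B : ℂ)^2 / (t : ℂ)^2) *
        ((ptraceB (((1 : Matrix A A ℂ) ⊗ₖ P z) * ξ)) *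
          (ptraceB (((1 : Matrix A A ℂ) ⊗ₖ P z) * ξ))ᴴ).trace
      = ((Fintype.card B : ℂ) / ((t : ℂ) * ((Fintype.card B : ℂ) + 1))) *
        (((ptraceB ξ) * (ptraceB ξ)ᴴ).trace + (ξ * ξᴴ).trace)) ∧
    ((∑ z, ((Fintype.card B : ℂ)^2 / (t : ℂ)^2) *
        ((ptraceB (((1 : Matrix A A ℂ) ⊗ₖ P z) * ξ)) *
          (ptraceB (((1 : Matrix A A ℂ) ⊗ₖ P z) * ξ))ᴴ).trace).re
      ≥ (1 / (t : ℝ)) * ((Fintype.card B : ℝ) / ((Fintype.card B : ℝ) + 1)) * (frobNorm ξ)^2) := by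
  set d : ℕ := Fintype.card B
  have identity : ∑ z, ((d : ℂ)^2 / (t : ℂ)^2) *
        (ptraceB ((1 ⊗ₖ P z) * ξ) * (ptraceB ((1 ⊗ₖ P z) * ξ))ᴴ).trace
      = (d / (t * (d + 1)) : ℂ) * ((ptraceB ξ * (ptraceB ξ)ᴴ).trace + (ξ * ξᴴ).trace) := by
    -- `d² / t² = d² / t * t⁻¹` holds also for `t = 0`, so no case split on `t` is needed.
    calc _ = (d : ℂ)^2 / t * (((t : ℂ)⁻¹ • ∑ z, P z ⊗ₖ P z) * blockGram ξ).trace := by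
          simp only [trace_ptraceB_mul_conjTranspose (hproj _).1, ← Finset.mul_sum,
            ← trace_sum, ← Matrix.sum_mul, smul_mul_assoc, trace_smul, smul_eq_mul]
          ring
      _ = (d : ℂ)^2 / t * ((d : ℂ) * (d + 1))⁻¹ *
            ((blockGram ξ).trace + (swapOp B * blockGram ξ).trace) := by
          rw [hdesign, smul_mul_assoc, trace_smul, add_mul, one_mul, trace_add, smul_eq_mul,
            mul_assoc]
      _ = _ := by
          rw [trace_blockGram, trace_swapOp_mul_blockGram]
          rcases eq_or_ne (d : ℂ) 0 with hd | hd
          · simp [hd]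
          · field_simp
  refine ⟨identity, ?_⟩
  have hcoeff : (d / (t * (d + 1)) : ℂ) = ((d / (t * (d + 1)) : ℝ) : ℂ) := by push_cast; rfl
  rw [identity, hcoeff, Complex.re_ofReal_mul, Complex.add_re, frobNorm_sq, ge_iff_le,
    one_div_mul_eq_div, div_div, mul_comm ((d : ℝ) + 1)]
  exact mul_le_mul_of_nonneg_left (le_add_of_nonneg_left (re_trace_mul_conjTranspose_nonneg _))
    (by positivity)
end

section
/- Let M_B be the measurement channel of a state two-design {P_z} on a d-dimensional space B, M_B(X) = Σ_z (d/t)·Tr[P_z X]·|z⟩⟨z|, and let σ_A be a full-rank density matrix on A. Then for any matrix ξ_{AB}, ‖σ_A^{-1/2} (I_A ⊗ M_B)(ξ_{AB}) σ_A^{-1/2}‖_∞ ≤ (d/t)·‖σ_A^{-1/2} ξ_{AB} σ_A^{-1/2}‖_∞. -/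
open Matrix Kronecker
open scoped ComplexOrder

/-- The operator (spectral) norm of a matrix, via its action on Euclidean space. -/
noncomputable def opNorm {n : Type*} [Fintype n] [DecidableEq n] (M : Matrix n n ℂ) : ℝ :=
  ‖Matrix.toEuclideanCLM (𝕜 := ℂ) M‖

open Classical in
/-- Real power of a Hermitian matrix, defined by functional calculus on eigenvalues
(junk value `0` on non-Hermitian input). -/
noncomputable def hpow {n : Type*} [Fintype n] [DecidableEq n] (M : Matrix n n ℂ) (r : ℝ) :
    Matrix n n ℂ :=
  if hM : M.IsHermitian then
    (hM.eigenvectorUnitary : Matrix n n ℂ) *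
      Matrix.diagonal (fun i => ((hM.eigenvalues i ^ r : ℝ) : ℂ)) *
      (star (hM.eigenvectorUnitary : Matrix n n ℂ))
  else 0

/-- The measurement channel (with side information) of the POVM `{(d/t)·P_z}`:
`(I_A ⊗ M_B)(ξ) = Σ_z (d/t)·(Tr_B[(1_A ⊗ P_z) ξ]) ⊗ |z⟩⟨z|`, as a matrix on A ⊗ ℂ^t. -/
noncomputable def measOut {A B : Type*} [Fintype A] [DecidableEq A] [Fintype B] [DecidableEq B]
    (t : ℕ) (P : Fin t → Matrix B B ℂ) (ξ : Matrix (A × B) (A × B) ℂ) :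
    Matrix (A × Fin t) (A × Fin t) ℂ :=
  Matrix.of fun p q =>
    if p.2 = q.2 then
      ((Fintype.card B : ℂ) / t) * (ptraceB (((1 : Matrix A A ℂ) ⊗ₖ P p.2) * ξ)) p.1 q.1
    else 0

/- ### Auxiliary lemmas -/

lemma toECLM_apply {n : Type*} [Fintype n] [DecidableEq n] (M : Matrix n n ℂ)
    (x : EuclideanSpace ℂ n) (i : n) :
    toEuclideanCLM (𝕜 := ℂ) M x i = ∑ j, M i j * x j := by
  have := Matrix.toEuclideanCLM_toLp (𝕜 := ℂ) M (WithLp.ofLp x)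
  simp at this
  rw [this]
  simp [Matrix.mulVec, dotProduct]

lemma pairing_le {n : Type*} [Fintype n] [DecidableEq n] (M : Matrix n n ℂ)
    (x y : EuclideanSpace ℂ n) :
    ‖(inner ℂ y (toEuclideanCLM (𝕜 := ℂ) M x) : ℂ)‖ ≤ opNorm M * ‖y‖ * ‖x‖ := by
  calc ‖(inner ℂ y (toEuclideanCLM (𝕜 := ℂ) M x) : ℂ)‖ ≤ ‖y‖ * ‖toEuclideanCLM (𝕜 := ℂ) M x‖ :=
        norm_inner_le_norm _ _
    _ ≤ ‖y‖ * (opNorm M * ‖x‖) := by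
        gcongr
        exact (toEuclideanCLM (𝕜 := ℂ) M).le_opNorm x
    _ = opNorm M * ‖y‖ * ‖x‖ := by ring

lemma opNorm_le_of_pairing {n : Type*} [Fintype n] [DecidableEq n] (M : Matrix n n ℂ) (K : ℝ)
    (hK : 0 ≤ K)
    (h : ∀ x y : EuclideanSpace ℂ n,
      ‖(inner ℂ y (toEuclideanCLM (𝕜 := ℂ) M x) : ℂ)‖ ≤ K * ‖y‖ * ‖x‖) :
    opNorm M ≤ K := by
  apply ContinuousLinearMap.opNorm_le_bound _ hK
  intro x
  set T := toEuclideanCLM (𝕜 := ℂ) M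
  have h2 := h x (T x)
  rw [inner_self_eq_norm_sq_to_K (𝕜 := ℂ)] at h2
  simp only [norm_pow, Complex.norm_real, RCLike.norm_ofReal, Real.norm_eq_abs, abs_norm] at h2
  nlinarith [norm_nonneg (T x), norm_nonneg x, mul_nonneg hK (norm_nonneg x)]

lemma key_identity {A B : Type*} [Fintype A] [DecidableEq A] [Fintype B] [DecidableEq B]
    (P : Matrix B B ℂ) (hP : P.IsHermitian) (hP2 : P * P = P)
    (η : Matrix (A × B) (A × B) ℂ) (u w : EuclideanSpace ℂ A) :
    (∑ i, ∑ j, (starRingEnd ℂ) (u i) * ((ptraceB ((1 ⊗ₖ P) * η)) i j * w j))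
      = ∑ k : B, (inner ℂ ((WithLp.equiv 2 _).symm (fun p : A × B => u p.1 * P p.2 k))
          (toEuclideanCLM (𝕜 := ℂ) η
            ((WithLp.equiv 2 _).symm (fun q : A × B => w q.1 * P q.2 k))) : ℂ) := by
  have hconj : ∀ l k, (starRingEnd ℂ) (P l k) = P k l := by
    intro l k
    conv_rhs => rw [← hP]
    simp [Matrix.conjTranspose_apply]
  have hPP : ∀ m l, (∑ k, P m k * P k l) = P m l := by
    intro m l; rw [← Matrix.mul_apply, hP2]
  have hT : ∀ i j, (ptraceB ((1 ⊗ₖ P) * η)) i j = ∑ k, ∑ l, P k l * η (i, l) (j, k) := by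
    intro i j
    simp only [ptraceB, Matrix.of_apply, Matrix.mul_apply, Fintype.sum_prod_type]
    refine Finset.sum_congr rfl fun k _ => ?_
    rw [Finset.sum_comm]
    refine Finset.sum_congr rfl fun l _ => ?_
    simp [Matrix.kroneckerMap_apply, Matrix.one_apply, ite_mul, Finset.sum_ite_eq]
  set S : ℂ := ∑ p : A × B, ∑ q : A × B,
      (starRingEnd ℂ) (u p.1) * (η p q * w q.1) * P q.2 p.2 with hS
  have hL : (∑ i, ∑ j, (starRingEnd ℂ) (u i) * ((ptraceB ((1 ⊗ₖ P) * η)) i j * w j)) = S := by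
    calc (∑ i, ∑ j, (starRingEnd ℂ) (u i) * ((ptraceB ((1 ⊗ₖ P) * η)) i j * w j))
        = ∑ i, ∑ j, ∑ m : B, ∑ l : B,
            (starRingEnd ℂ) (u i) * (η (i, l) (j, m) * w j) * P m l := by
          refine Finset.sum_congr rfl fun i _ => Finset.sum_congr rfl fun j _ => ?_
          rw [hT]
          simp only [Finset.mul_sum, Finset.sum_mul]
          exact Finset.sum_congr rfl fun m _ => Finset.sum_congr rfl fun l _ => by ring
      _ = ∑ i, ∑ j, ∑ l : B, ∑ m : B,
            (starRingEnd ℂ) (u i) * (η (i, l) (j, m) * w j) * P m l := by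
          exact Finset.sum_congr rfl fun i _ => Finset.sum_congr rfl fun j _ => Finset.sum_comm
      _ = ∑ i, ∑ l : B, ∑ j, ∑ m : B,
            (starRingEnd ℂ) (u i) * (η (i, l) (j, m) * w j) * P m l := by
          exact Finset.sum_congr rfl fun i _ => Finset.sum_comm
      _ = S := by
          rw [hS]
          simp only [Fintype.sum_prod_type]
  have hR : (∑ k : B, (inner ℂ ((WithLp.equiv 2 _).symm (fun p : A × B => u p.1 * P p.2 k))
          (toEuclideanCLM (𝕜 := ℂ) η
            ((WithLp.equiv 2 _).symm (fun q : A × B => w q.1 * P q.2 k))) : ℂ)) = S := by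
    calc (∑ k : B, (inner ℂ ((WithLp.equiv 2 _).symm (fun p : A × B => u p.1 * P p.2 k))
          (toEuclideanCLM (𝕜 := ℂ) η
            ((WithLp.equiv 2 _).symm (fun q : A × B => w q.1 * P q.2 k))) : ℂ))
        = ∑ k : B, ∑ p : A × B, ∑ q : A × B,
            ((starRingEnd ℂ) (u p.1) * P k p.2) * (η p q * (w q.1 * P q.2 k)) := by
          refine Finset.sum_congr rfl fun k _ => ?_
          simp only [PiLp.inner_apply, RCLike.inner_apply, toECLM_apply,
            WithLp.equiv_symm_apply, PiLp.toLp_apply, _root_.map_mul, hconj, Finset.mul_sum]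
          exact Finset.sum_congr rfl fun p _ => by
            rw [Finset.sum_mul]; exact Finset.sum_congr rfl fun q _ => by ring
      _ = ∑ p : A × B, ∑ q : A × B, ∑ k : B,
            ((starRingEnd ℂ) (u p.1) * P k p.2) * (η p q * (w q.1 * P q.2 k)) := by
          rw [Finset.sum_comm]
          exact Finset.sum_congr rfl fun p _ => Finset.sum_comm
      _ = S := by
          rw [hS]
          refine Finset.sum_congr rfl fun p _ => Finset.sum_congr rfl fun q _ => ?_
          calc (∑ k : B, ((starRingEnd ℂ) (u p.1) * P k p.2) * (η p q * (w q.1 * P q.2 k)))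
              = ∑ k : B, (P q.2 k * P k p.2) *
                  ((starRingEnd ℂ) (u p.1) * (η p q * w q.1)) := by
                exact Finset.sum_congr rfl fun k _ => by ring
            _ = (∑ k : B, P q.2 k * P k p.2) *
                  ((starRingEnd ℂ) (u p.1) * (η p q * w q.1)) := by
                rw [Finset.sum_mul]
            _ = (starRingEnd ℂ) (u p.1) * (η p q * w q.1) * P q.2 p.2 := by
                rw [hPP]; ring
  rw [hL, hR]

lemma sum_norm_sq_vec {A B : Type*} [Fintype A] [DecidableEq A] [Fintype B] [DecidableEq B]
    (P : Matrix B B ℂ) (hP : P.IsHermitian) (hP2 : P * P = P) (hPtr : P.trace = 1)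
    (u : EuclideanSpace ℂ A) :
    ∑ k : B, ‖((WithLp.equiv 2 _).symm (fun p : A × B => u p.1 * P p.2 k) :
        EuclideanSpace ℂ (A × B))‖ ^ 2 = ‖u‖ ^ 2 := by
  have hconj : ∀ l k, (starRingEnd ℂ) (P l k) = P k l := by
    intro l k
    conv_rhs => rw [← hP]
    simp [Matrix.conjTranspose_apply]
  have htr : ∑ k : B, ∑ l : B, ‖P l k‖ ^ 2 = 1 := by
    have h1 : (P * P).trace = 1 := by rw [hP2, hPtr]
    have h2 : (P * P).trace = ∑ l : B, ∑ k : B, ((‖P l k‖ ^ 2 : ℝ) : ℂ) := by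
      rw [Matrix.trace]
      refine Finset.sum_congr rfl fun l _ => ?_
      rw [Matrix.diag_apply, Matrix.mul_apply]
      refine Finset.sum_congr rfl fun k _ => ?_
      rw [← hconj l k, Complex.mul_conj]
      norm_cast
      simp [Complex.normSq_eq_norm_sq]
    have h4 : ∑ l : B, ∑ k : B, ‖P l k‖ ^ 2 = 1 := by
      have h5 := h2.symm.trans h1
      exact_mod_cast h5
    rw [Finset.sum_comm]
    exact h4
  have hx : ∀ k : B, ‖((WithLp.equiv 2 _).symm (fun p : A × B => u p.1 * P p.2 k) :
      EuclideanSpace ℂ (A × B))‖ ^ 2 = ‖u‖ ^ 2 * ∑ l : B, ‖P l k‖ ^ 2 := by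
    intro k
    rw [EuclideanSpace.norm_eq, Real.sq_sqrt (by positivity), EuclideanSpace.norm_eq,
      Real.sq_sqrt (by positivity)]
    simp only [WithLp.equiv_symm_apply, PiLp.toLp_apply, norm_mul, mul_pow, Fintype.sum_prod_type]
    rw [← Finset.sum_mul_sum]
  rw [Fintype.sum_congr _ _ hx, ← Finset.mul_sum, htr, mul_one]

lemma quad_bound {A B : Type*} [Fintype A] [DecidableEq A] [Fintype B] [DecidableEq B]
    (P : Matrix B B ℂ) (hP : P.IsHermitian) (hP2 : P * P = P) (hPtr : P.trace = 1)
    (η : Matrix (A × B) (A × B) ℂ) (u w : EuclideanSpace ℂ A) :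
    ‖∑ i, ∑ j, (starRingEnd ℂ) (u i) * ((ptraceB ((1 ⊗ₖ P) * η)) i j * w j)‖
      ≤ opNorm η * ‖u‖ * ‖w‖ := by
  rw [key_identity P hP hP2 η u w]
  set a : B → EuclideanSpace ℂ (A × B) :=
    fun k => (WithLp.equiv 2 _).symm (fun p : A × B => u p.1 * P p.2 k) with ha
  set b : B → EuclideanSpace ℂ (A × B) :=
    fun k => (WithLp.equiv 2 _).symm (fun q : A × B => w q.1 * P q.2 k) with hb
  have hna : ∑ k : B, ‖a k‖ ^ 2 = ‖u‖ ^ 2 := sum_norm_sq_vec P hP hP2 hPtr u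
  have hnb : ∑ k : B, ‖b k‖ ^ 2 = ‖w‖ ^ 2 := sum_norm_sq_vec P hP hP2 hPtr w
  calc ‖∑ k : B, (inner ℂ (a k) (toEuclideanCLM (𝕜 := ℂ) η (b k)) : ℂ)‖
      ≤ ∑ k : B, ‖(inner ℂ (a k) (toEuclideanCLM (𝕜 := ℂ) η (b k)) : ℂ)‖ :=
        norm_sum_le _ _
    _ ≤ ∑ k : B, opNorm η * (‖a k‖ * ‖b k‖) := by
        refine Finset.sum_le_sum fun k _ => ?_
        have := pairing_le η (b k) (a k)
        rw [mul_assoc] at this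
        exact this
    _ = opNorm η * ∑ k : B, ‖a k‖ * ‖b k‖ := by rw [Finset.mul_sum]
    _ ≤ opNorm η * (‖u‖ * ‖w‖) := by
        have hCS := Real.sum_mul_le_sqrt_mul_sqrt Finset.univ (fun k : B => ‖a k‖)
          (fun k : B => ‖b k‖)
        rw [hna, hnb, Real.sqrt_sq (norm_nonneg u), Real.sqrt_sq (norm_nonneg w)] at hCS
        exact mul_le_mul_of_nonneg_left hCS (norm_nonneg _)
    _ = opNorm η * ‖u‖ * ‖w‖ := by ring

/-- Core estimate: the measurement channel is a contraction up to `d/t` in operator norm. -/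
lemma opNorm_measOut_le {A B : Type*} [Fintype A] [DecidableEq A] [Fintype B] [DecidableEq B]
    (t : ℕ) (P : Fin t → Matrix B B ℂ)
    (hproj : ∀ z, (P z).IsHermitian ∧ P z * P z = P z ∧ (P z).trace = 1)
    (η : Matrix (A × B) (A × B) ℂ) :
    opNorm (measOut t P η) ≤ ((Fintype.card B : ℝ) / t) * opNorm η := by
  set c : ℝ := (Fintype.card B : ℝ) / t with hc
  have hc0 : 0 ≤ c := by positivity
  apply opNorm_le_of_pairing _ _ (mul_nonneg hc0 (norm_nonneg _))
  intro x y
  -- slices of x and y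
  set xz : Fin t → EuclideanSpace ℂ A := fun z => (WithLp.equiv 2 _).symm (fun i => x (i, z))
  set yz : Fin t → EuclideanSpace ℂ A := fun z => (WithLp.equiv 2 _).symm (fun i => y (i, z))
  have hpair : (inner ℂ y (toEuclideanCLM (𝕜 := ℂ) (measOut t P η) x) : ℂ)
      = ∑ z : Fin t, ((c : ℝ) : ℂ) *
          (∑ i, ∑ j, (starRingEnd ℂ) (yz z i) * ((ptraceB ((1 ⊗ₖ P z) * η)) i j * xz z j)) := by
    simp only [PiLp.inner_apply, RCLike.inner_apply, toECLM_apply]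
    rw [Fintype.sum_prod_type, Finset.sum_comm]
    refine Finset.sum_congr rfl fun z _ => ?_
    rw [Finset.mul_sum]
    refine Finset.sum_congr rfl fun i _ => ?_
    have hyz : yz z i = y (i, z) := rfl
    rw [mul_comm _ ((starRingEnd ℂ) _)]
    rw [hyz, Fintype.sum_prod_type, Finset.mul_sum, Finset.mul_sum]
    refine Finset.sum_congr rfl fun j _ => ?_
    have hxz : xz z j = x (j, z) := rfl
    have hcol : (∑ w : Fin t, measOut t P η (i, z) (j, w) * x (j, w))
        = ((c : ℝ) : ℂ) * ((ptraceB ((1 ⊗ₖ P z) * η)) i j * x (j, z)) := by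
      simp only [measOut, Matrix.of_apply, ite_mul, zero_mul, Finset.sum_ite_eq,
        Finset.mem_univ, if_true]
      rw [hc]
      push_cast
      ring
    rw [hcol, hxz]
    ring
  rw [hpair]
  have hbound : ∀ z : Fin t, ‖((c : ℝ) : ℂ) *
      (∑ i, ∑ j, (starRingEnd ℂ) (yz z i) * ((ptraceB ((1 ⊗ₖ P z) * η)) i j * xz z j))‖
      ≤ c * (opNorm η * (‖yz z‖ * ‖xz z‖)) := by
    intro z
    rw [norm_mul, Complex.norm_real, Real.norm_eq_abs, abs_of_nonneg hc0]
    have := quad_bound (P z) (hproj z).1 (hproj z).2.1 (hproj z).2.2 η (yz z) (xz z)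
    calc c * ‖∑ i, ∑ j, (starRingEnd ℂ) (yz z i) * ((ptraceB ((1 ⊗ₖ P z) * η)) i j * xz z j)‖
        ≤ c * (opNorm η * ‖yz z‖ * ‖xz z‖) := mul_le_mul_of_nonneg_left this hc0
      _ = c * (opNorm η * (‖yz z‖ * ‖xz z‖)) := by ring
  have hslice : ∀ (v : EuclideanSpace ℂ (A × Fin t)),
      ∑ z : Fin t, ‖((WithLp.equiv 2 _).symm (fun i => v (i, z)) : EuclideanSpace ℂ A)‖ ^ 2
        = ‖v‖ ^ 2 := by
    intro v
    rw [EuclideanSpace.norm_eq, Real.sq_sqrt (by positivity)]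
    rw [Fintype.sum_prod_type, Finset.sum_comm]
    refine Finset.sum_congr rfl fun z _ => ?_
    rw [EuclideanSpace.norm_eq, Real.sq_sqrt (by positivity)]
    simp [WithLp.equiv_symm_apply, PiLp.toLp_apply]
  calc ‖∑ z : Fin t, ((c : ℝ) : ℂ) *
        (∑ i, ∑ j, (starRingEnd ℂ) (yz z i) * ((ptraceB ((1 ⊗ₖ P z) * η)) i j * xz z j))‖
      ≤ ∑ z : Fin t, ‖((c : ℝ) : ℂ) *
        (∑ i, ∑ j, (starRingEnd ℂ) (yz z i) * ((ptraceB ((1 ⊗ₖ P z) * η)) i j * xz z j))‖ :=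
        norm_sum_le _ _
    _ ≤ ∑ z : Fin t, c * (opNorm η * (‖yz z‖ * ‖xz z‖)) :=
        Finset.sum_le_sum fun z _ => hbound z
    _ = c * opNorm η * ∑ z : Fin t, ‖yz z‖ * ‖xz z‖ := by
        rw [Finset.mul_sum]
        refine Finset.sum_congr rfl fun z _ => by ring
    _ ≤ c * opNorm η * (‖y‖ * ‖x‖) := by
        have hCS := Real.sum_mul_le_sqrt_mul_sqrt Finset.univ (fun z : Fin t => ‖yz z‖)
          (fun z : Fin t => ‖xz z‖)
        rw [hslice y, hslice x, Real.sqrt_sq (norm_nonneg y), Real.sqrt_sq (norm_nonneg x)]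
          at hCS
        have h0 : 0 ≤ c * opNorm η := by
          apply mul_nonneg hc0 (norm_nonneg _)
        exact mul_le_mul_of_nonneg_left hCS h0
    _ = c * opNorm η * ‖y‖ * ‖x‖ := by ring

lemma kron_one_mul_apply {A C : Type*} [Fintype A] [DecidableEq A] [Fintype C] [DecidableEq C]
    (S : Matrix A A ℂ) (X : Matrix (A × C) (A × C) ℂ) (i : A) (z : C) (q : A × C) :
    ((S ⊗ₖ (1 : Matrix C C ℂ)) * X) (i, z) q = ∑ a, S i a * X (a, z) q := by
  rw [Matrix.mul_apply, Fintype.sum_prod_type]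
  refine Finset.sum_congr rfl fun a _ => ?_
  simp [Matrix.kroneckerMap_apply, Matrix.one_apply, mul_ite, ite_mul, Finset.sum_ite_eq]

lemma mul_kron_one_apply {A C : Type*} [Fintype A] [DecidableEq A] [Fintype C] [DecidableEq C]
    (S : Matrix A A ℂ) (X : Matrix (A × C) (A × C) ℂ) (p : A × C) (j : A) (w : C) :
    (X * (S ⊗ₖ (1 : Matrix C C ℂ))) p (j, w) = ∑ b, X p (b, w) * S b j := by
  rw [Matrix.mul_apply, Fintype.sum_prod_type]
  refine Finset.sum_congr rfl fun b _ => ?_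
  simp [Matrix.kroneckerMap_apply, Matrix.one_apply, mul_ite, ite_mul, Finset.sum_ite_eq']

lemma ptraceB_conj {A B : Type*} [Fintype A] [DecidableEq A] [Fintype B] [DecidableEq B]
    (S S' : Matrix A A ℂ) (X : Matrix (A × B) (A × B) ℂ) :
    ptraceB ((S ⊗ₖ (1 : Matrix B B ℂ)) * X * (S' ⊗ₖ (1 : Matrix B B ℂ)))
      = S * ptraceB X * S' := by
  ext i j
  calc ptraceB ((S ⊗ₖ (1 : Matrix B B ℂ)) * X * (S' ⊗ₖ (1 : Matrix B B ℂ))) i j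
      = ∑ k : B, ∑ b, ∑ a, S i a * (X (a, k) (b, k) * S' b j) := by
        simp only [ptraceB, Matrix.of_apply]
        refine Finset.sum_congr rfl fun k _ => ?_
        rw [mul_kron_one_apply]
        refine Finset.sum_congr rfl fun b _ => ?_
        rw [kron_one_mul_apply, Finset.sum_mul]
        refine Finset.sum_congr rfl fun a _ => by ring
    _ = ∑ b, ∑ k : B, ∑ a, S i a * (X (a, k) (b, k) * S' b j) := Finset.sum_comm
    _ = ∑ b, ∑ a, ∑ k : B, S i a * (X (a, k) (b, k) * S' b j) :=
        Finset.sum_congr rfl fun b _ => Finset.sum_comm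
    _ = (S * ptraceB X * S') i j := by
        rw [Matrix.mul_apply]
        refine Finset.sum_congr rfl fun b _ => ?_
        rw [Matrix.mul_apply, Finset.sum_mul]
        refine Finset.sum_congr rfl fun a _ => ?_
        simp only [ptraceB, Matrix.of_apply, Finset.mul_sum, Finset.sum_mul]
        refine Finset.sum_congr rfl fun k _ => by ring

lemma kron_comm_one {A B : Type*} [Fintype A] [DecidableEq A] [Fintype B] [DecidableEq B]
    (S : Matrix A A ℂ) (P : Matrix B B ℂ) :
    ((1 : Matrix A A ℂ) ⊗ₖ P) * (S ⊗ₖ (1 : Matrix B B ℂ))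
      = (S ⊗ₖ (1 : Matrix B B ℂ)) * ((1 : Matrix A A ℂ) ⊗ₖ P) := by
  rw [← Matrix.mul_kronecker_mul, ← Matrix.mul_kronecker_mul, one_mul, mul_one, one_mul, mul_one]

lemma conj_measOut {A B : Type*} [Fintype A] [DecidableEq A] [Fintype B] [DecidableEq B]
    (t : ℕ) (P : Fin t → Matrix B B ℂ) (S S' : Matrix A A ℂ) (ξ : Matrix (A × B) (A × B) ℂ) :
    (S ⊗ₖ (1 : Matrix (Fin t) (Fin t) ℂ)) * measOut t P ξ * (S' ⊗ₖ (1 : Matrix (Fin t) (Fin t) ℂ))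
      = measOut t P ((S ⊗ₖ (1 : Matrix B B ℂ)) * ξ * (S' ⊗ₖ (1 : Matrix B B ℂ))) := by
  ext ⟨i, z⟩ ⟨j, w⟩
  rw [Matrix.mul_assoc, kron_one_mul_apply]
  calc (∑ a, S i a * (measOut t P ξ * (S' ⊗ₖ (1 : Matrix (Fin t) (Fin t) ℂ))) (a, z) (j, w))
      = ∑ a, ∑ b, S i a * (measOut t P ξ (a, z) (b, w) * S' b j) := by
        refine Finset.sum_congr rfl fun a _ => ?_
        rw [mul_kron_one_apply, Finset.mul_sum]
    _ = measOut t P ((S ⊗ₖ (1 : Matrix B B ℂ)) * ξ * (S' ⊗ₖ (1 : Matrix B B ℂ))) (i, z) (j, w) := by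
        have hX : ((1 : Matrix A A ℂ) ⊗ₖ P z) *
              ((S ⊗ₖ (1 : Matrix B B ℂ)) * ξ * (S' ⊗ₖ (1 : Matrix B B ℂ)))
            = (S ⊗ₖ (1 : Matrix B B ℂ)) * (((1 : Matrix A A ℂ) ⊗ₖ P z) * ξ) *
              (S' ⊗ₖ (1 : Matrix B B ℂ)) := by
          rw [← Matrix.mul_assoc, ← Matrix.mul_assoc, kron_comm_one,
            Matrix.mul_assoc (S ⊗ₖ (1 : Matrix B B ℂ)) ((1 : Matrix A A ℂ) ⊗ₖ P z) ξ]
        by_cases hzw : z = w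
        · subst hzw
          simp only [measOut, Matrix.of_apply, if_pos rfl]
          rw [hX, ptraceB_conj, Matrix.mul_apply, Finset.mul_sum, Finset.sum_comm]
          refine Finset.sum_congr rfl fun b _ => ?_
          rw [Matrix.mul_apply, Finset.sum_mul, Finset.mul_sum]
          refine Finset.sum_congr rfl fun a _ => by simp only [if_true]; ring
        · simp only [measOut, Matrix.of_apply, if_neg hzw]
          simp

/-- For the measurement channel of a family of rank-one projectors `{P_z}` on B and a full-rank
density matrix σ on A, `‖σ^{-1/2} (I_A ⊗ M_B)(ξ) σ^{-1/2}‖_∞ ≤ (d/t)·‖σ^{-1/2} ξ σ^{-1/2}‖_∞`. -/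
theorem opNorm_weighted_measOut_le {A B : Type*} [Fintype A] [DecidableEq A]
    [Fintype B] [DecidableEq B] (t : ℕ) (P : Fin t → Matrix B B ℂ)
    (hproj : ∀ z, (P z).IsHermitian ∧ P z * P z = P z ∧ (P z).trace = 1)
    (σ : Matrix A A ℂ) (hσ : σ.PosDef) (hσtr : σ.trace = 1)
    (ξ : Matrix (A × B) (A × B) ℂ) :
    opNorm ((hpow σ (-(1/2 : ℝ)) ⊗ₖ (1 : Matrix (Fin t) (Fin t) ℂ)) * measOut t P ξ *
        (hpow σ (-(1/2 : ℝ)) ⊗ₖ (1 : Matrix (Fin t) (Fin t) ℂ)))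
      ≤ ((Fintype.card B : ℝ) / t) *
        opNorm ((hpow σ (-(1/2 : ℝ)) ⊗ₖ (1 : Matrix B B ℂ)) * ξ *
          (hpow σ (-(1/2 : ℝ)) ⊗ₖ (1 : Matrix B B ℂ))) := by
  rw [conj_measOut]
  exact opNorm_measOut_le t P hproj _
end

section
/- For any subnormalized bipartite positive semidefinite operator ρ_{XY} on X⊗Y (i.e., ρ_{XY} ⪰ 0 and Tr ρ_{XY} ≤ 1), one has ρ_{XY} ⪯ d_X · 1_X ⊗ ρ_Y, where ρ_Y = Tr_X[ρ_{XY}] and d_X = dim X. -/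
open Matrix Kronecker
open scoped ComplexOrder

/-- Partial trace over the first (X) tensor factor. -/
noncomputable def ptraceX {X Y : Type*} [Fintype X] [Fintype Y]
    (M : Matrix (X × Y) (X × Y) ℂ) : Matrix Y Y ℂ :=
  Matrix.of fun i j => ∑ k : X, M (k, i) (k, j)

/-- For any subnormalized bipartite positive semidefinite operator ρ on X⊗Y,
one has ρ ⪯ d_X · 1_X ⊗ ρ_Y in the Loewner order, where ρ_Y = Tr_X[ρ]. -/
theorem posSemidef_le_card_smul_one_kron_marginal {X Y : Type*} [Fintype X] [DecidableEq X]
    [Fintype Y] [DecidableEq Y]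
    (ρ : Matrix (X × Y) (X × Y) ℂ) (hρ : ρ.PosSemidef) (htr : ρ.trace.re ≤ 1) :
    ((Fintype.card X : ℂ) • ((1 : Matrix X X ℂ) ⊗ₖ ptraceX ρ) - ρ).PosSemidef := by
  obtain ⟨B, hB⟩ : ∃ B : Matrix (X × Y) (X × Y) ℂ, ρ = Bᴴ * B := by
    open MatrixOrder in
    simpa only [star_eq_conjTranspose] using CStarAlgebra.nonneg_iff_eq_star_mul_self.mp hρ.nonneg
  have hA : (ptraceX ρ).IsHermitian := by
    ext y y'
    simp only [conjTranspose_apply, ptraceX, of_apply, star_sum]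
    exact Finset.sum_congr rfl fun k _ => hρ.1.apply (k, y) (k, y')
  have h1 : ((1 : Matrix X X ℂ) ⊗ₖ ptraceX ρ).IsHermitian := by
    ext ⟨x, y⟩ ⟨x', y'⟩
    simp only [conjTranspose_apply, kroneckerMap_apply, one_apply, star_mul']
    by_cases h : x = x'
    · subst h
      simp [hA.apply]
    · simp only [h, if_false, zero_mul, star_zero]
      simp [h]
      exact fun hxx => absurd hxx.symm h
  refine Matrix.posSemidef_iff_dotProduct_mulVec.mpr ⟨?_, ?_⟩
  · refine Matrix.IsHermitian.sub ?_ hρ.1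
    unfold Matrix.IsHermitian
    rw [conjTranspose_smul, h1]
    norm_num
  · intro v
    classical
    -- the slice vectors
    set e : X → X → (X × Y) → ℂ := fun k x p => if p.1 = k then v (x, p.2) else 0 with he
    -- quadratic form of ρ as a sum of squared norms
    have hq : ∀ u : (X × Y) → ℂ, star u ⬝ᵥ ρ.mulVec u
        = ∑ p, (Complex.normSq ((B.mulVec u) p) : ℂ) := by
      intro u
      rw [hB, ← Matrix.mulVec_mulVec, Matrix.dotProduct_mulVec, ← Matrix.star_mulVec]
      simp [dotProduct, Complex.normSq_eq_conj_mul_self]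
    -- decomposition of v
    have hv : v = ∑ x : X, e x x := by
      funext p
      simp [he]
    have hBv : ∀ p, (B.mulVec v) p = ∑ x : X, (B.mulVec (e x x)) p := by
      intro p
      conv_lhs => rw [hv]
      have hms := map_sum B.mulVecLin (fun x => e x x) Finset.univ
      simp only [mulVecLin_apply] at hms
      rw [hms, Finset.sum_apply]
    -- key identity for the Kronecker term
    have key1 : star v ⬝ᵥ (((1 : Matrix X X ℂ) ⊗ₖ ptraceX ρ).mulVec v)
        = ∑ x : X, ∑ k : X, star (e k x) ⬝ᵥ ρ.mulVec (e k x) := by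
      rw [he]
      simp only [dotProduct, mulVec, Fintype.sum_prod_type, kroneckerMap_apply, one_apply,
        ptraceX, of_apply, Pi.star_apply, ite_mul, mul_ite, zero_mul, mul_zero,
        Finset.mul_sum, Finset.sum_mul,
        apply_ite (star : ℂ → ℂ), star_zero, RCLike.star_def,
        Finset.sum_ite_irrel, Finset.sum_const_zero, Finset.sum_ite_eq, Finset.sum_ite_eq',
        Finset.mem_univ, if_true]
      refine Finset.sum_congr rfl fun x _ => ?_
      conv_rhs => rw [Finset.sum_comm]
      refine Finset.sum_congr rfl fun y _ => ?_
      conv_rhs => rw [Finset.sum_comm]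
      refine Finset.sum_congr rfl fun y2 _ => Finset.sum_congr rfl fun k _ => ?_
      ring
    -- pointwise Cauchy–Schwarz
    have key2 : ∀ p, Complex.normSq ((B.mulVec v) p)
        ≤ (Fintype.card X : ℝ) * ∑ x : X, Complex.normSq ((B.mulVec (e x x)) p) := by
      intro p
      rw [hBv p]
      set z : X → ℂ := fun x => (B.mulVec (e x x)) p with hz
      have h1' : norm (∑ x, z x) ≤ ∑ x, norm (z x) := by
        simpa using norm_sum_le (E := ℂ) Finset.univ z
      calc Complex.normSq (∑ x, z x) = norm (∑ x, z x) ^ 2 := (Complex.sq_norm _).symm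
        _ ≤ (∑ x, norm (z x)) ^ 2 := by
            exact pow_le_pow_left₀ (norm_nonneg _) h1' 2
        _ = (∑ x, 1 * norm (z x)) ^ 2 := by simp
        _ ≤ (∑ _x : X, (1 : ℝ) ^ 2) * ∑ x, norm (z x) ^ 2 :=
            Finset.sum_mul_sq_le_sq_mul_sq _ _ _
        _ = (Fintype.card X : ℝ) * ∑ x, Complex.normSq (z x) := by simp [Complex.sq_norm]
    -- real inequality
    have hreal : ∑ p, Complex.normSq ((B.mulVec v) p)
        ≤ (Fintype.card X : ℝ) * ∑ x : X, ∑ k : X, ∑ p,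
            Complex.normSq ((B.mulVec (e k x)) p) := by
      calc ∑ p, Complex.normSq ((B.mulVec v) p)
          ≤ ∑ p, (Fintype.card X : ℝ) * ∑ x : X, Complex.normSq ((B.mulVec (e x x)) p) :=
            Finset.sum_le_sum fun p _ => key2 p
        _ = (Fintype.card X : ℝ) * ∑ x : X, ∑ p, Complex.normSq ((B.mulVec (e x x)) p) := by
            rw [← Finset.mul_sum, Finset.sum_comm]
        _ ≤ (Fintype.card X : ℝ) * ∑ x : X, ∑ k : X, ∑ p,
              Complex.normSq ((B.mulVec (e k x)) p) := by
            refine mul_le_mul_of_nonneg_left (Finset.sum_le_sum fun x _ => ?_)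
              (Nat.cast_nonneg _)
            exact Finset.single_le_sum
              (f := fun k => ∑ p, Complex.normSq ((B.mulVec (e k x)) p))
              (fun k _ => Finset.sum_nonneg fun p _ => Complex.normSq_nonneg _)
              (Finset.mem_univ x)
    -- assemble
    rw [Matrix.sub_mulVec, dotProduct_sub, Matrix.smul_mulVec,
      dotProduct_smul, key1, hq]
    have : ∑ x : X, ∑ k : X, star (e k x) ⬝ᵥ ρ.mulVec (e k x)
        = ((∑ x : X, ∑ k : X, ∑ p, Complex.normSq ((B.mulVec (e k x)) p) : ℝ) : ℂ) := by
      push_cast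
      exact Finset.sum_congr rfl fun x _ => Finset.sum_congr rfl fun k _ => hq (e k x)
    rw [this]
    rw [sub_nonneg]
    have hle : ((∑ p, Complex.normSq ((B.mulVec v) p) : ℝ) : ℂ)
        ≤ (((Fintype.card X : ℝ) * ∑ x : X, ∑ k : X, ∑ p,
            Complex.normSq ((B.mulVec (e k x)) p) : ℝ) : ℂ) := by
      exact Complex.real_le_real.mpr hreal
    calc (∑ p, (Complex.normSq ((B.mulVec v) p) : ℂ))
        = ((∑ p, Complex.normSq ((B.mulVec v) p) : ℝ) : ℂ) := by push_cast; rfl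
      _ ≤ (((Fintype.card X : ℝ) * ∑ x : X, ∑ k : X, ∑ p,
            Complex.normSq ((B.mulVec (e k x)) p) : ℝ) : ℂ) := hle
      _ = (Fintype.card X : ℂ) • ((∑ x : X, ∑ k : X, ∑ p,
            Complex.normSq ((B.mulVec (e k x)) p) : ℝ) : ℂ) := by
          push_cast
          simp [smul_eq_mul]
end
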